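/- Two closed monitors m and n are ω-verdict equivalent if and only if the symmetric difference of their acceptance languages together with the symmetric difference of their rejection languages, (L_a(m) Δ L_a(n)) ∪ (L_r(m) Δ L_r(n)), is a finite set of finite traces. -/

import Mathlib

/-- Recursion-free regular monitors (with variables). -/
inductive Mon (Act : Type) : Type
  | end_ : Mon Act
  | yes : Mon Act
  | no : Mon Act
  | act : Act → Mon Act → Mon Act
  | plus : Mon Act → Mon Act → Mon Act
  | var : ℕ → Mon Act

variable {Act : Type}

/-- Verdicts: `end`, `yes`, `no`. -/
inductive IsVerdict : Mon Act → Prop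
  | end_ : IsVerdict Mon.end_
  | yes : IsVerdict Mon.yes
  | no : IsVerdict Mon.no

/-- Labelled transition relation; `none` is the silent action τ. -/
inductive Step : Mon Act → Option Act → Mon Act → Prop
  | act (a : Act) (m : Mon Act) : Step (Mon.act a m) (some a) m
  | plusL {m n m' : Mon Act} {α : Option Act} : Step m α m' → Step (Mon.plus m n) α m'
  | plusR {m n n' : Mon Act} {α : Option Act} : Step n α n' → Step (Mon.plus m n) α n'
  | verdict {v : Mon Act} {α : Option Act} : IsVerdict v → Step v α v

/-- Reflexive-transitive closure of τ-steps. -/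
def TauStar (m n : Mon Act) : Prop :=
  Relation.ReflTransGen (fun p q => Step p none q) m n

/-- Strong transition along a finite trace. -/
inductive Trace : Mon Act → List Act → Mon Act → Prop
  | refl (m : Mon Act) : Trace m [] m
  | cons {m m' m'' : Mon Act} {a : Act} {s : List Act} :
      Step m (some a) m' → Trace m' s m'' → Trace m (a :: s) m''

/-- Weak transition along a finite trace (τ-steps allowed throughout). -/
inductive WTrace : Mon Act → List Act → Mon Act → Prop
  | nil {m m' : Mon Act} : TauStar m m' → WTrace m [] m'
  | cons {m m₁ m₂ m' : Mon Act} {a : Act} {s : List Act} :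
      TauStar m m₁ → Step m₁ (some a) m₂ → WTrace m₂ s m' → WTrace m (a :: s) m'

/-- Acceptance language. -/
def La (m : Mon Act) : Set (List Act) := {s | WTrace m s Mon.yes}

/-- Rejection language. -/
def Lr (m : Mon Act) : Set (List Act) := {s | WTrace m s Mon.no}

/-- Verdict equivalence. -/
def VerdEq (m n : Mon Act) : Prop := La m = La n ∧ Lr m = Lr n

/-- `A · Act^ω`: infinite words having a finite prefix in `A`. -/
def omegaCl (A : Set (List Act)) : Set (ℕ → Act) :=
  {w | ∃ n : ℕ, (List.range n).map w ∈ A}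

/-- ω-verdict equivalence. -/
def OmegaEq (m n : Mon Act) : Prop :=
  omegaCl (La m) = omegaCl (La n) ∧ omegaCl (Lr m) = omegaCl (Lr n)

/-- Closed monitors: no variables. -/
def Closed : Mon Act → Prop
  | Mon.act _ m => Closed m
  | Mon.plus m n => Closed m ∧ Closed n
  | Mon.var _ => False
  | _ => True

/-- `yes` occurs as a subterm. -/
def HasYes : Mon Act → Prop
  | Mon.yes => True
  | Mon.act _ m => HasYes m
  | Mon.plus m n => HasYes m ∨ HasYes n
  | _ => False

/-- `no` occurs as a subterm. -/
def HasNo : Mon Act → Prop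
  | Mon.no => True
  | Mon.act _ m => HasNo m
  | Mon.plus m n => HasNo m ∨ HasNo n
  | _ => False

/-- Syntactic depth. -/
def depth : Mon Act → ℕ
  | Mon.act _ m => depth m + 1
  | Mon.plus m n => max (depth m) (depth n)
  | _ => 0

/-- Applying a substitution. -/
def msubst (σ : ℕ → Mon Act) : Mon Act → Mon Act
  | Mon.var x => σ x
  | Mon.act a m => Mon.act a (msubst σ m)
  | Mon.plus m n => Mon.plus (msubst σ m) (msubst σ n)
  | m => m

/-- Equational derivability from an axiom set `E`. -/
inductive Deriv (E : Mon Act → Mon Act → Prop) : Mon Act → Mon Act → Prop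
  | ax {m n} : E m n → Deriv E m n
  | refl (m) : Deriv E m m
  | symm {m n} : Deriv E m n → Deriv E n m
  | trans {m n p} : Deriv E m n → Deriv E n p → Deriv E m p
  | act (a : Act) {m n} : Deriv E m n → Deriv E (Mon.act a m) (Mon.act a n)
  | plus {m m' n n'} : Deriv E m m' → Deriv E n n' → Deriv E (Mon.plus m n) (Mon.plus m' n')
  | subst (σ : ℕ → Mon Act) {m n} : Deriv E m n → Deriv E (msubst σ m) (msubst σ n)

def vx : Mon Act := Mon.var 0
def vy : Mon Act := Mon.var 1
def vz : Mon Act := Mon.var 2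

/-- The axiom system `E_v`. -/
inductive EvAx : Mon Act → Mon Act → Prop
  | A1 : EvAx (Mon.plus vx vy) (Mon.plus vy vx)
  | A2 : EvAx (Mon.plus vx (Mon.plus vy vz)) (Mon.plus (Mon.plus vx vy) vz)
  | A3 : EvAx (Mon.plus vx vx) vx
  | A4 : EvAx (Mon.plus vx Mon.end_) vx
  | Ea (a : Act) : EvAx (Mon.act a Mon.end_) Mon.end_
  | Ya (a : Act) : EvAx Mon.yes (Mon.plus Mon.yes (Mon.act a Mon.yes))
  | Na (a : Act) : EvAx Mon.no (Mon.plus Mon.no (Mon.act a Mon.no))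
  | Da (a : Act) : EvAx (Mon.act a (Mon.plus vx vy)) (Mon.plus (Mon.act a vx) (Mon.act a vy))

/-- Sum of a list of monitors (`end` for the empty sum). -/
def sumList : List (Mon Act) → Mon Act
  | [] => Mon.end_
  | [m] => m
  | m :: ms => Mon.plus m (sumList ms)

/-- `s.m`: the monitor performing exactly the actions of `s` and then behaving as `m`. -/
def prefixMon (s : List Act) (m : Mon Act) : Mon Act :=
  List.foldr Mon.act m s

/-- Build `Σ_{(a,m)∈l} a.m [+ yes] [+ no]`. -/
def buildNF (l : List (Act × Mon Act)) (hy hn : Bool) : Mon Act :=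
  sumList (l.map (fun p => Mon.act p.1 p.2) ++
    (if hy then [Mon.yes] else []) ++ (if hn then [Mon.no] else []))

/-- Normal forms for closed monitors. -/
inductive NF : Mon Act → Prop
  | mk (l : List (Act × Mon Act)) (hy hn : Bool) :
      (l.map Prod.fst).Nodup →
      (∀ p ∈ l, p.2 ≠ Mon.end_) →
      (∀ p ∈ l, NF p.2) →
      NF (buildNF l hy hn)

/-- Build `Σ_{(a,m)∈l} a.m + Σ_{x∈vs} x [+ yes] [+ no]`. -/
def buildONF (l : List (Act × Mon Act)) (vs : List ℕ) (hy hn : Bool) : Mon Act :=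
  sumList (l.map (fun p => Mon.act p.1 p.2) ++ vs.map Mon.var ++
    (if hy then [Mon.yes] else []) ++ (if hn then [Mon.no] else []))

/-- Open normal forms. -/
inductive ONF : Mon Act → Prop
  | mk (l : List (Act × Mon Act)) (vs : List ℕ) (hy hn : Bool) :
      (l.map Prod.fst).Nodup → vs.Nodup →
      (∀ p ∈ l, p.2 ≠ Mon.end_) →
      (∀ p ∈ l, ONF p.2) →
      ONF (buildONF l vs hy hn)

/-- `s^i`: the `i`-fold concatenation of `s`. -/
def spow (s : List Act) (i : ℕ) : List Act := (List.replicate i s).flatten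

/-- All traces of length exactly `n` over the alphabet listed by `L`. -/
def tuples (L : List Act) : ℕ → List (List Act)
  | 0 => [[]]
  | n + 1 => (tuples L n).flatMap (fun t => L.map (fun a => a :: t))

/-- All traces of length at most `n`. -/
def allUpTo (L : List Act) (n : ℕ) : List (List Act) :=
  (List.range (n + 1)).flatMap (tuples L)

/-- `s̄^≤(m)`: sum of `s'.m` over traces `s'` with `|s'| ≤ |s|` that are not prefixes of `s`. -/
def sbarLe [DecidableEq Act] (L : List Act) (s : List Act) (m : Mon Act) : Mon Act :=
  sumList (((allUpTo L s.length).filter (fun t => !(t.isPrefixOf s))).map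
    (fun t => prefixMon t m))

/-- `s̄(m) = s̄^≤(m) + s.Σ_{a∈Act} a.m`. -/
def sbar [DecidableEq Act] (L : List Act) (s : List Act) (m : Mon Act) : Mon Act :=
  Mon.plus (sbarLe L s m) (prefixMon s (sumList (L.map fun a => Mon.act a m)))

/-- `s̄^(k)(m)`. -/
def sbarK [DecidableEq Act] (L : List Act) (s : List Act) (m : Mon Act) : ℕ → Mon Act
  | 0 => sbar L s m
  | 1 => sbar L s m
  | k + 2 =>
      Mon.plus
        (sumList ((List.range k).map (fun i => prefixMon (spow s (i + 1)) (sbarLe L s m))))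
        (prefixMon (spow s (k + 1)) (sbar L s m))

/-! Verdicts are irrevocable, so both languages of a monitor are closed under extension, and a
monitor that reaches a verdict along a trace already reaches it within the first `depth m` actions.
If extension-closed `A` and `B` differ on finitely many words, an infinite word with a prefix in `A`
has infinitely many prefixes in `A`, so one of them lies in `B`. Conversely, if
`A · Act^ω ⊆ B · Act^ω` and membership in `B` is decided by the length-`d` prefix, then extending a
word `s ∈ A \ B` of length `≥ d` to an infinite word shows that `s.take d ∈ B`, hence `s ∈ B`; so
`A \ B` consists of words shorter than `d`, of which there are finitely many. -/

def IsExtensionClosed (A : Set (List Act)) : Prop :=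
  ∀ ⦃s t : List Act⦄, s <+: t → s ∈ A → t ∈ A

lemma List.map_range_prefix {α : Type*} (w : ℕ → α) {j k : ℕ} (h : j ≤ k) :
    (List.range j).map w <+: (List.range k).map w := by
  rw [show List.range j = (List.range k).take j by rw [List.take_range, min_eq_left h],
    List.map_take]
  exact List.take_prefix _ _

section OmegaClosure

variable {A B : Set (List Act)}

lemma omegaCl_subset_of_finite_diff (hA : IsExtensionClosed A) (hfin : (A \ B).Finite) :
    omegaCl A ⊆ omegaCl B := by
  rintro w ⟨k, hk⟩
  by_contra hw
  have hmem : ∀ j, (List.range (k + j)).map w ∈ A \ B := fun j =>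
    ⟨hA (List.map_range_prefix w (Nat.le_add_right k j)) hk, fun hB => hw ⟨k + j, hB⟩⟩
  have hinj : Function.Injective (fun j => (List.range (k + j)).map w) := fun i j hij => by
    simpa using congrArg List.length hij
  exact Set.infinite_of_injective_forall_mem hinj hmem hfin

lemma diff_subset_length_lt [Nonempty Act] {d : ℕ} (hB : IsExtensionClosed B)
    (hBd : ∀ s ∈ B, s.take d ∈ B) (h : omegaCl A ⊆ omegaCl B) :
    A \ B ⊆ {s | s.length < d} := by
  rintro s ⟨hsA, hsB⟩
  show s.length < d
  by_contra! hlen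
  let w : ℕ → Act := fun j => s.getD j (Classical.arbitrary Act)
  have hs : (List.range s.length).map w = s :=
    List.ext_getElem (by simp) fun i _ hi => by simp [w, hi]
  obtain ⟨k, hk⟩ := h ⟨s.length, hs ▸ hsA⟩
  have hkd : (List.range (min d k)).map w ∈ B := by
    simpa only [← List.take_range, List.map_take] using hBd _ hk
  exact hsB (hs ▸ hB (List.map_range_prefix w ((min_le_left d k).trans hlen)) hkd)

theorem omegaCl_eq_iff_finite_symmDiff [Finite Act] [Nonempty Act] {dA dB : ℕ}
    (hA : IsExtensionClosed A) (hB : IsExtensionClosed B)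
    (hAd : ∀ s ∈ A, s.take dA ∈ A) (hBd : ∀ s ∈ B, s.take dB ∈ B) :
    omegaCl A = omegaCl B ↔ (symmDiff A B).Finite := by
  refine ⟨fun h => ?_, fun h => ?_⟩
  · refine (List.finite_length_le Act (max dA dB)).subset ?_
    rintro s (hs | hs)
    · exact le_max_of_le_right (Nat.le_of_lt (diff_subset_length_lt hB hBd h.le hs))
    · exact le_max_of_le_left (Nat.le_of_lt (diff_subset_length_lt hA hAd h.ge hs))
  · rw [Set.symmDiff_def, Set.finite_union] at h
    exact (omegaCl_subset_of_finite_diff hA h.1).antisymm (omegaCl_subset_of_finite_diff hB h.2)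

end OmegaClosure

section Verdicts

variable {m p q v : Mon Act}

lemma Step.eq_of_isVerdict {α : Option Act} (hp : IsVerdict p) (h : Step p α q) : q = p := by
  cases hp <;> cases h <;> rfl

lemma Step.isVerdict_of_tau (h : Step p none q) : IsVerdict q := by
  generalize hα : (none : Option Act) = α at h
  induction h with
  | act => cases hα
  | plusL _ ih | plusR _ ih => exact ih hα
  | verdict hv => exact hv

lemma Step.depth_lt_or_tau {a : Act} (h : Step p (some a) q) :
    depth q < depth p ∨ Step p none q := by
  generalize hα : some a = α at h
  induction h with
  | act => exact Or.inl (Nat.lt_succ_self _)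
  | plusL _ ih =>
    exact (ih hα).imp (fun h => h.trans_le (le_max_left _ _)) Step.plusL
  | plusR _ ih =>
    exact (ih hα).imp (fun h => h.trans_le (le_max_right _ _)) Step.plusR
  | verdict hv => exact Or.inr (Step.verdict hv)

lemma TauStar.eq_of_isVerdict (hp : IsVerdict p) (h : TauStar p q) : q = p := by
  induction h with
  | refl => rfl
  | tail _ hstep ih => subst ih; exact hstep.eq_of_isVerdict hp

lemma TauStar.eq_or_isVerdict (h : TauStar p q) : q = p ∨ IsVerdict q := by
  induction h with
  | refl => exact Or.inl rfl
  | tail _ hstep _ => exact Or.inr hstep.isVerdict_of_tau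

lemma WTrace.eq_of_isVerdict {s : List Act} (hp : IsVerdict p) (h : WTrace p s q) : q = p := by
  induction h with
  | nil ht => exact ht.eq_of_isVerdict hp
  | cons ht hstep _ ih =>
    obtain rfl := ht.eq_of_isVerdict hp
    obtain rfl := hstep.eq_of_isVerdict hp
    exact ih hp

lemma WTrace.of_tauStar (hv : IsVerdict v) (h : TauStar m v) (t : List Act) : WTrace m t v := by
  induction t generalizing m with
  | nil => exact .nil h
  | cons _ t ih => exact .cons h (.verdict hv) (ih .refl)

lemma isExtensionClosed_wtrace (hv : IsVerdict v) (m : Mon Act) :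
    IsExtensionClosed {s | WTrace m s v} := by
  rintro s _ ⟨r, rfl⟩ (h : WTrace m s v)
  induction h with
  | nil ht => simpa using WTrace.of_tauStar hv ht r
  | cons ht hstep _ ih => exact WTrace.cons ht hstep (ih hv)

/-- Unless the trace is absorbed by a verdict, each visible step strictly decreases the depth. -/
lemma WTrace.take_depth {s : List Act} (hv : IsVerdict v) (h : WTrace m s v) :
    WTrace m (s.take (depth m)) v := by
  induction h with
  | nil ht => simpa using WTrace.nil ht
  | @cons p p₁ p₂ _ a s ht hstep hw ih =>
    rcases ht.eq_or_isVerdict with rfl | hp₁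
    · rcases hstep.depth_lt_or_tau with hlt | hτ
      · obtain ⟨d, hd⟩ : ∃ d, depth p₁ = d + 1 := ⟨depth p₁ - 1, by omega⟩
        rw [hd, List.take_succ_cons]
        refine .cons .refl hstep (isExtensionClosed_wtrace hv _ ?_ (ih hv))
        exact List.take_prefix_take_left (by omega)
      · have hp₂ := hτ.isVerdict_of_tau
        obtain rfl := hw.eq_of_isVerdict hp₂
        exact WTrace.of_tauStar hp₂ (.single hτ) _
    · obtain rfl := hstep.eq_of_isVerdict hp₁
      obtain rfl := hw.eq_of_isVerdict hp₁
      exact WTrace.of_tauStar hp₁ ht _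

theorem omegaCl_wtrace_eq_iff [Finite Act] [Nonempty Act] (hv : IsVerdict v) (m n : Mon Act) :
    omegaCl {s | WTrace m s v} = omegaCl {s | WTrace n s v} ↔
      (symmDiff {s | WTrace m s v} {s | WTrace n s v}).Finite :=
  omegaCl_eq_iff_finite_symmDiff (isExtensionClosed_wtrace hv m) (isExtensionClosed_wtrace hv n)
    (fun _ h => WTrace.take_depth hv h) (fun _ h => WTrace.take_depth hv h)

end Verdicts

theorem stmt19_general [Fintype Act] [Nonempty Act] (m n : Mon Act) :
    OmegaEq m n ↔ (symmDiff (La m) (La n) ∪ symmDiff (Lr m) (Lr n)).Finite := by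
  rw [OmegaEq, Set.finite_union, La, La, Lr, Lr, omegaCl_wtrace_eq_iff IsVerdict.yes,
    omegaCl_wtrace_eq_iff IsVerdict.no]

/-- over a finite nonempty alphabet, two closed monitors are
ω-verdict equivalent iff their acceptance and rejection languages differ on
only finitely many finite traces. -/
theorem stmt19 [Fintype Act] [Nonempty Act] (m n : Mon Act)
    (hm : Closed m) (hn : Closed n) :
    OmegaEq m n ↔ (symmDiff (La m) (La n) ∪ symmDiff (Lr m) (Lr n)).Finite :=
  stmt19_general m n
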